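/- arXiv:1705.01877 — 7 statements merged into one kernel-verified Lean document; each statement's English description precedes it below -/
import Mathlib

section
/- Let n ≥ 1, N ≥ 1, and let x : Fin n → (Fin N → ℝ) be a dataset with sample mean m_X = (1/n)∑ᵢ x i ∈ ℝ^N and sample covariance matrix S_X = (1/n)∑ᵢ (x i − m_X)(x i − m_X)ᵀ. Then for every m ∈ ℝ^N and every positive definite real N×N matrix Σ, with g_{m,Σ}(t) = (2π)^{−N/2} (det Σ)^{−1/2} exp(−(1/2)(t−m)ᵀ Σ⁻¹ (t−m)), one has −(1/n)∑ᵢ ln g_{m,Σ}(x i) = (N/2)·ln(2π) + (1/2)·(m_X − m)ᵀ Σ⁻¹ (m_X − m) + (1/2)·tr(Σ⁻¹ S_X) + (1/2)·ln(det Σ). -/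
open Matrix

lemma tr_aux {N : ℕ} (A : Matrix (Fin N) (Fin N) ℝ) (u : Fin N → ℝ) :
    (A * vecMulVec u u).trace = u ⬝ᵥ A.mulVec u := by
  simp only [Matrix.trace, Matrix.mul_apply, Matrix.vecMulVec_apply, dotProduct,
    Matrix.mulVec, Matrix.diag, Finset.mul_sum]
  apply Finset.sum_congr rfl; intro i _; apply Finset.sum_congr rfl; intro j _; ring

lemma sum_dot' {n N : ℕ} (d : Fin n → Fin N → ℝ) (v : Fin N → ℝ) :
    ∑ i, d i ⬝ᵥ v = (∑ i, d i) ⬝ᵥ v := by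
  simp only [dotProduct, Finset.sum_apply, Finset.sum_mul]
  exact Finset.sum_comm

lemma dot_sum' {n N : ℕ} (d : Fin n → Fin N → ℝ) (v : Fin N → ℝ) :
    ∑ i, v ⬝ᵥ d i = v ⬝ᵥ (∑ i, d i) := by
  simp only [dotProduct, Finset.sum_apply, Finset.mul_sum]
  exact Finset.sum_comm

lemma quad_sum {n N : ℕ} (hn : (n : ℝ) ≠ 0) (x : Fin n → (Fin N → ℝ))
    (mX m : Fin N → ℝ) (hmX : mX = (1 / (n : ℝ)) • ∑ i, x i)
    (A : Matrix (Fin N) (Fin N) ℝ) :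
    ∑ i, (x i - m) ⬝ᵥ A.mulVec (x i - m)
      = (n : ℝ) * ((mX - m) ⬝ᵥ A.mulVec (mX - m))
        + ∑ i, (x i - mX) ⬝ᵥ A.mulVec (x i - mX) := by
  have hsum : ∑ i, (x i - mX) = 0 := by
    rw [Finset.sum_sub_distrib, hmX, Finset.sum_const, Finset.card_univ, Fintype.card_fin,
      ← Nat.cast_smul_eq_nsmul ℝ, smul_smul, mul_one_div, div_self hn, one_smul, sub_self]
  have key : ∀ i, (x i - m) ⬝ᵥ A.mulVec (x i - m)
      = (x i - mX) ⬝ᵥ A.mulVec (x i - mX)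
        + ((x i - mX) ⬝ᵥ A.mulVec (mX - m) + (mX - m) ⬝ᵥ A.mulVec (x i - mX))
        + (mX - m) ⬝ᵥ A.mulVec (mX - m) := by
    intro i
    have h : x i - m = (x i - mX) + (mX - m) := by abel
    rw [h, Matrix.mulVec_add, add_dotProduct, dotProduct_add, dotProduct_add]
    ring
  rw [Finset.sum_congr rfl fun i _ => key i]
  simp only [Finset.sum_add_distrib]
  rw [sum_dot' (fun i => x i - mX), dot_sum' (fun i => A.mulVec (x i - mX))]
  rw [show (∑ i : Fin n, A.mulVec (x i - mX)) = A.mulVec (∑ i, (x i - mX)) from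
    (map_sum (Matrix.mulVecLin A) _ _).symm]
  rw [hsum]
  simp [Finset.sum_const, Finset.card_univ]
  ring

/-- Multivariate Gaussian density with mean `m` and covariance matrix `S`. -/
noncomputable def mGaussPdf {N : ℕ} (m : Fin N → ℝ) (S : Matrix (Fin N) (Fin N) ℝ)
    (t : Fin N → ℝ) : ℝ :=
  (2 * Real.pi) ^ (-(N : ℝ) / 2) * S.det ^ (-(1 : ℝ) / 2) *
    Real.exp (-(1 / 2) * ((t - m) ⬝ᵥ S⁻¹.mulVec (t - m)))

/-- Empirical cross-entropy of a multivariate dataset w.r.t. a Gaussian `N(m, Σ)`. -/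
theorem crossEntropy_mGaussian_eq (n N : ℕ) (hn : 1 ≤ n) (hN : 1 ≤ N)
    (x : Fin n → (Fin N → ℝ))
    (mX : Fin N → ℝ) (hmX : mX = (1 / (n : ℝ)) • ∑ i, x i)
    (SX : Matrix (Fin N) (Fin N) ℝ)
    (hSX : SX = (1 / (n : ℝ)) • ∑ i, Matrix.vecMulVec (x i - mX) (x i - mX))
    (m : Fin N → ℝ) (Sig : Matrix (Fin N) (Fin N) ℝ) (hSig : Sig.PosDef) :
    -(1 / (n : ℝ)) * ∑ i, Real.log (mGaussPdf m Sig (x i)) =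
      ((N : ℝ) / 2) * Real.log (2 * Real.pi)
        + (1 / 2) * ((mX - m) ⬝ᵥ Sig⁻¹.mulVec (mX - m))
        + (1 / 2) * Matrix.trace (Sig⁻¹ * SX)
        + (1 / 2) * Real.log Sig.det := by
  have hn' : (n : ℝ) ≠ 0 := by positivity
  have h2pi : (0 : ℝ) < 2 * Real.pi := by positivity
  have hdet : (0 : ℝ) < Sig.det := hSig.det_pos
  -- log of the pdf
  have hlog : ∀ i, Real.log (mGaussPdf m Sig (x i)) =
      (-(N : ℝ) / 2) * Real.log (2 * Real.pi) + (-(1 : ℝ) / 2) * Real.log Sig.det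
        + (-(1 / 2) * ((x i - m) ⬝ᵥ Sig⁻¹.mulVec (x i - m))) := by
    intro i
    unfold mGaussPdf
    rw [Real.log_mul (by positivity) (Real.exp_ne_zero _),
      Real.log_mul (by positivity) (by positivity),
      Real.log_rpow h2pi, Real.log_rpow hdet, Real.log_exp]
  -- trace term
  have htr : Matrix.trace (Sig⁻¹ * SX)
      = (1 / (n : ℝ)) * ∑ i, (x i - mX) ⬝ᵥ Sig⁻¹.mulVec (x i - mX) := by
    rw [hSX, Matrix.mul_smul, Matrix.trace_smul, Matrix.mul_sum, Matrix.trace_sum]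
    simp only [smul_eq_mul]
    congr 1
    exact Finset.sum_congr rfl fun i _ => tr_aux Sig⁻¹ (x i - mX)
  have hq := quad_sum hn' x mX m hmX Sig⁻¹
  rw [Finset.sum_congr rfl fun i _ => hlog i]
  simp only [Finset.sum_add_distrib, Finset.sum_const, Finset.card_univ, Fintype.card_fin,
    nsmul_eq_mul]
  rw [htr, show (∑ i, (-(1 / 2) * ((x i - m) ⬝ᵥ Sig⁻¹.mulVec (x i - m))))
      = -(1/2) * ∑ i, ((x i - m) ⬝ᵥ Sig⁻¹.mulVec (x i - m)) from (Finset.mul_sum _ _ _).symm, hq]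
  field_simp
  ring
end

section
/- Let α ∈ (0, 1/2) and let p > 0 be the (1−α)-quantile of the standard normal distribution, i.e. (gaussianReal 0 1)(Iic p) = 1 − α. Then for every m ∈ ℝ and σ > 0, the Gaussian measure gaussianReal m σ² satisfies the linear constraint at leakage level α, i.e. (gaussianReal m σ²)(Iic 0) ≥ 1 − α or (gaussianReal m σ²)(Ici 0) ≥ 1 − α, if and only if |m| ≥ p·σ. -/
open ProbabilityTheory Set MeasureTheory

lemma stdGaussian_Iic_strictMono : StrictMono (fun x : ℝ => gaussianReal 0 1 (Iic x)) := by
  intro x y hxy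
  have hdisj : Disjoint (Iic x) (Ioc x y) := by
    simp [Set.disjoint_left]
    intro a hax haxx; linarith
  have hunion : Iic y = Iic x ∪ Ioc x y := (Iic_union_Ioc_eq_Iic hxy.le).symm
  have hmeas : gaussianReal 0 1 (Iic y) =
      gaussianReal 0 1 (Iic x) + gaussianReal 0 1 (Ioc x y) := by
    rw [hunion, measure_union hdisj measurableSet_Ioc]
  have hpos : 0 < gaussianReal 0 1 (Ioc x y) := by
    rw [pos_iff_ne_zero]
    intro h
    have := gaussianReal_absolutelyContinuous' 0 (one_ne_zero) h
    rw [Real.volume_Ioc] at this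
    simp [ENNReal.ofReal_eq_zero] at this
    linarith
  have hlt : gaussianReal 0 1 (Iic x) < ⊤ := measure_lt_top _ _
  simp only
  rw [hmeas]
  exact ENNReal.lt_add_right hlt.ne hpos.ne'

lemma neg_one_sq_nnreal : NNReal.mk ((-1 : ℝ) ^ 2) (sq_nonneg _) * 1 = 1 := by
  apply NNReal.coe_inj.mp
  norm_num

lemma stdGaussian_symm (y : ℝ) : gaussianReal 0 1 (Ici y) = gaussianReal 0 1 (Iic (-y)) := by
  have hmap : (gaussianReal 0 1).map (fun x : ℝ => (-1 : ℝ) * x) = gaussianReal 0 1 := by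
    rw [gaussianReal_map_const_mul, neg_one_sq_nnreal, mul_zero]
  conv_lhs => rw [← hmap]
  rw [Measure.map_apply (measurable_const_mul _) measurableSet_Ici]
  congr 1
  ext z
  simp only [mem_preimage, mem_Ici, mem_Iic]
  constructor <;> intro h <;> linarith

lemma sq_nnreal (σ : ℝ) : NNReal.mk (σ ^ 2) (sq_nonneg _) * 1 = Real.toNNReal (σ ^ 2) := by
  apply NNReal.coe_inj.mp
  simp [Real.coe_toNNReal', max_eq_left (sq_nonneg σ)]

lemma gaussian_affine (m σ : ℝ) (hσ : 0 < σ) :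
    (gaussianReal 0 1).map (fun x : ℝ => σ * x + m) = gaussianReal m (Real.toNNReal (σ ^ 2)) := by
  have h1 : (fun x : ℝ => σ * x + m) = (fun x : ℝ => x + m) ∘ (fun x : ℝ => σ * x) := rfl
  rw [h1, ← Measure.map_map (measurable_add_const m) (measurable_const_mul σ),
    gaussianReal_map_const_mul, gaussianReal_map_add_const, sq_nnreal, mul_zero, zero_add]

/-- A Gaussian measure `N(m, σ²)` satisfies the linear constraint `({0}, α)` —
i.e. it puts mass at least `1 - α` on one side of `0` — iff `|m| ≥ p σ`,
where `p` is the `(1-α)`-quantile of the standard normal distribution. -/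
theorem gaussian_linear_constraint_iff (α : ℝ) (hα : α ∈ Set.Ioo (0 : ℝ) (1 / 2))
    (p : ℝ) (hp : 0 < p)
    (hq : gaussianReal 0 1 (Iic p) = ENNReal.ofReal (1 - α))
    (m σ : ℝ) (hσ : 0 < σ) :
    (ENNReal.ofReal (1 - α) ≤ gaussianReal m (Real.toNNReal (σ ^ 2)) (Iic 0) ∨
      ENNReal.ofReal (1 - α) ≤ gaussianReal m (Real.toNNReal (σ ^ 2)) (Ici 0)) ↔
      p * σ ≤ |m| := by
  have hmeas : Measurable (fun x : ℝ => σ * x + m) :=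
    (measurable_const_mul σ).add_const m
  have hIic : gaussianReal m (Real.toNNReal (σ ^ 2)) (Iic 0) =
      gaussianReal 0 1 (Iic (-m / σ)) := by
    rw [← gaussian_affine m σ hσ, Measure.map_apply hmeas measurableSet_Iic]
    congr 1
    ext x
    simp only [mem_preimage, mem_Iic]
    rw [le_div_iff₀ hσ, ← sub_nonneg]
    constructor <;> intro h <;> nlinarith
  have hIci : gaussianReal m (Real.toNNReal (σ ^ 2)) (Ici 0) =
      gaussianReal 0 1 (Iic (m / σ)) := by
    rw [← gaussian_affine m σ hσ, Measure.map_apply hmeas measurableSet_Ici,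
      show (m / σ) = -(-m / σ) by ring, ← stdGaussian_symm]
    congr 1
    ext x
    simp only [mem_preimage, mem_Ici]
    rw [div_le_iff₀ hσ, ← sub_nonneg]
    constructor <;> intro h <;> nlinarith
  have key : ∀ x : ℝ, ENNReal.ofReal (1 - α) ≤ gaussianReal 0 1 (Iic x) ↔ p ≤ x := by
    intro x
    rw [← hq]
    exact stdGaussian_Iic_strictMono.le_iff_le
  rw [hIic, hIci, key, key]
  rw [abs_eq_max_neg, le_max_iff, mul_comm]
  constructor
  · rintro (h | h)
    · right; rw [le_div_iff₀ hσ] at h; linarith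
    · left; rw [le_div_iff₀ hσ] at h; linarith
  · rintro (h | h)
    · right; rw [le_div_iff₀ hσ]; linarith
    · left; rw [le_div_iff₀ hσ]; linarith
end

section
/- Let m_X ∈ ℝ with m_X ≠ 0, s_X > 0, and p > 0, and define h(m,σ) = (1/2)·((s_X² + (m − m_X)²)/σ² + ln(σ²) + ln(2π)) for m ∈ ℝ, σ > 0. If |m_X| ≥ p·s_X, then for every m ∈ ℝ and σ > 0 with |m| ≥ p·σ one has h(m_X, s_X) ≤ h(m, σ); that is, the pair (m_X, s_X) minimizes h subject to the constraint |m| ≥ pσ. -/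
/-- If the sample mean and standard deviation already satisfy the linear
constraint `|m| ≥ p σ`, then they minimize the empirical cross-entropy
`h(m, σ)` subject to that constraint. -/
theorem constrained_crossEntropy_min_unconstrained
    (mX sX p : ℝ) (hmX : mX ≠ 0) (hsX : 0 < sX) (hp : 0 < p)
    (h : ℝ → ℝ → ℝ)
    (hdef : ∀ m σ, h m σ =
      (1 / 2) * ((sX ^ 2 + (m - mX) ^ 2) / σ ^ 2 + Real.log (σ ^ 2) + Real.log (2 * Real.pi)))
    (hcon : p * sX ≤ |mX|) :
    ∀ m σ : ℝ, 0 < σ → p * σ ≤ |m| → h mX sX ≤ h m σ := by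
  intro m σ hσ _
  rw [hdef, hdef]
  have hσ2 : (0:ℝ) < σ ^ 2 := by positivity
  have hs2 : (0:ℝ) < sX ^ 2 := by positivity
  have ht : Real.log (sX ^ 2 / σ ^ 2) ≤ sX ^ 2 / σ ^ 2 - 1 :=
    Real.log_le_sub_one_of_pos (by positivity)
  rw [Real.log_div hs2.ne' hσ2.ne'] at ht
  have hd1 : (sX ^ 2 + (mX - mX) ^ 2) / sX ^ 2 = 1 := by field_simp; ring
  have hd2 : (sX ^ 2 + (m - mX) ^ 2) / σ ^ 2 = sX ^ 2 / σ ^ 2 + (m - mX) ^ 2 / σ ^ 2 :=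
    add_div _ _ _
  have hnn : 0 ≤ (m - mX) ^ 2 / σ ^ 2 := by positivity
  rw [hd1, hd2]
  linarith
end

section
/- Let m_X ∈ ℝ with m_X ≠ 0, s_X > 0, and p > 0 with |m_X| < p·s_X. Define m* = (−p²·m_X + sign(m_X)·p·√((p²+4)·m_X² + 4·s_X²))/2 and σ* = |m*|/p. Then σ* > 0, |m*| = p·σ*, and for every m ∈ ℝ and σ > 0 with |m| ≥ p·σ one has h(m*, σ*) ≤ h(m, σ), where h(m,σ) = (1/2)·((s_X² + (m − m_X)²)/σ² + ln(σ²) + ln(2π)). That is, the Gaussian N(m*, σ*) minimizes the empirical cross-entropy under the constraint |m| ≥ pσ. -/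
set_option maxHeartbeats 1000000 in
/-- When the sample parameters violate the constraint (`|m_X| < p s_X`), the
closed-form pair `(m*, σ*)` lies on the boundary of the constraint
(`|m*| = p σ*`, `σ* > 0`) and minimizes the empirical cross-entropy `h(m, σ)`
among all Gaussians satisfying `|m| ≥ p σ`. -/
theorem constrained_crossEntropy_min_boundary
    (mX sX p : ℝ) (hmX : mX ≠ 0) (hsX : 0 < sX) (hp : 0 < p)
    (hcon : |mX| < p * sX)
    (mstar σstar : ℝ)
    (hmstar : mstar =
      (-(p ^ 2) * mX + Real.sign mX * p * Real.sqrt ((p ^ 2 + 4) * mX ^ 2 + 4 * sX ^ 2)) / 2)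
    (hσstar : σstar = |mstar| / p)
    (h : ℝ → ℝ → ℝ)
    (hdef : ∀ m σ, h m σ =
      (1 / 2) * ((sX ^ 2 + (m - mX) ^ 2) / σ ^ 2 + Real.log (σ ^ 2) + Real.log (2 * Real.pi))) :
    0 < σstar ∧ |mstar| = p * σstar ∧
      ∀ m σ : ℝ, 0 < σ → p * σ ≤ |m| → h mstar σstar ≤ h m σ := by
  have ha0 : 0 < |mX| := abs_pos.mpr hmX
  set a : ℝ := |mX| with ha
  set R : ℝ := Real.sqrt ((p ^ 2 + 4) * mX ^ 2 + 4 * sX ^ 2) with hRdef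
  have hR2 : R ^ 2 = (p ^ 2 + 4) * mX ^ 2 + 4 * sX ^ 2 := Real.sq_sqrt (by positivity)
  have ha2 : a ^ 2 = mX ^ 2 := sq_abs mX
  have hR0 : 0 ≤ R := Real.sqrt_nonneg _
  have hRgt : p * a < R := by
    by_contra hc
    push_neg at hc
    have h1 : R * R ≤ (p * a) * (p * a) := mul_le_mul hc hc hR0 (by positivity)
    have ha2p : p ^ 2 * a ^ 2 = p ^ 2 * mX ^ 2 := by rw [ha2]
    have hmX2 : 0 < mX ^ 2 := by positivity
    have hsX2 : 0 < sX ^ 2 := by positivity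
    linarith [h1, hR2, ha2p, hmX2, hsX2]
  have hsgn : Real.sign mX * mX = a ∧ Real.sign mX ^ 2 = 1 := by
    rcases lt_or_gt_of_ne hmX with h' | h'
    · rw [ha, Real.sign_of_neg h', abs_of_neg h']; constructor <;> ring
    · rw [ha, Real.sign_of_pos h', abs_of_pos h']; constructor <;> ring
  obtain ⟨hs1, hs2⟩ := hsgn
  have hmXs : mX = Real.sign mX * a := by
    linear_combination Real.sign mX * hs1 - mX * hs2
  set u : ℝ := (R - p * a) / 2 with hudef
  have hupos : 0 < u := by rw [hudef]; linarith
  have hms : mstar = Real.sign mX * (p * u) := by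
    rw [hmstar, hudef]
    linear_combination ((-(p ^ 2)) / 2) * hmXs
  have habs : |mstar| = p * u := by
    rw [hms, abs_mul]
    have hsabs : |Real.sign mX| = 1 := by
      rcases lt_or_gt_of_ne hmX with h' | h'
      · rw [Real.sign_of_neg h']; norm_num
      · rw [Real.sign_of_pos h']; norm_num
    rw [hsabs, one_mul, abs_of_pos (by positivity)]
  have hσu : σstar = u := by
    rw [hσstar, habs]
    field_simp
  have hquad : u ^ 2 + a * p * u = a ^ 2 + sX ^ 2 := by
    rw [hudef]
    linear_combination (1 / 4) * hR2 - (p ^ 2 / 4 + 1) * ha2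
  have hgta : a < p * u := by
    by_contra hc
    push_neg at hc
    have hc2 : p * R ≤ (p ^ 2 + 2) * a := by
      rw [hudef] at hc
      linarith
    have h1 : (p * R) * (p * R) ≤ ((p ^ 2 + 2) * a) * ((p ^ 2 + 2) * a) :=
      mul_le_mul hc2 hc2 (by positivity) (by positivity)
    have hcon2 : a * a < (p * sX) * (p * sX) :=
      mul_self_lt_mul_self ha0.le hcon
    have hR2a : R ^ 2 = (p ^ 2 + 4) * a ^ 2 + 4 * sX ^ 2 := by rw [hR2, ← ha2]
    have key : p ^ 2 * R ^ 2 = p ^ 2 * ((p ^ 2 + 4) * a ^ 2 + 4 * sX ^ 2) := by rw [hR2a]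
    linarith [h1, key, hcon2]
  refine ⟨hσu ▸ hupos, by rw [habs, hσu], ?_⟩
  intro m σ hσ hpm
  rw [hdef, hdef, hσu]
  have hlog : Real.log (u ^ 2) ≤ Real.log (σ ^ 2) + (2 * (u / σ) - 2) := by
    have h1 : Real.log (u / σ) ≤ u / σ - 1 := Real.log_le_sub_one_of_pos (by positivity)
    rw [Real.log_div (ne_of_gt hupos) (ne_of_gt hσ)] at h1
    have h2 : Real.log (u ^ 2) = 2 * Real.log u := by
      rw [show u ^ 2 = u * u by ring, Real.log_mul (ne_of_gt hupos) (ne_of_gt hupos)]; ring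
    have h3 : Real.log (σ ^ 2) = 2 * Real.log σ := by
      rw [show σ ^ 2 = σ * σ by ring, Real.log_mul (ne_of_gt hσ) (ne_of_gt hσ)]; ring
    linarith
  have hd : mstar - mX = Real.sign mX * (p * u - a) := by
    rw [hms]
    linear_combination -hmXs
  have hmm : (mstar - mX) ^ 2 = (p * u - a) ^ 2 := by
    rw [hd]
    linear_combination ((p * u - a) ^ 2) * hs2
  have hfac1 : m * mX ≤ |m| * a := by
    calc m * mX ≤ |m * mX| := le_abs_self _
    _ = |m| * a := by rw [abs_mul, ha]
  have habs0 : (0 : ℝ) ≤ |m| := abs_nonneg m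
  have hsx : sX ^ 2 = u ^ 2 + a * p * u - a ^ 2 := by linarith
  have hkey : (sX ^ 2 + (mstar - mX) ^ 2) * σ ^ 2 + 2 * u ^ 3 * σ - 2 * u ^ 2 * σ ^ 2
      ≤ (sX ^ 2 + (m - mX) ^ 2) * u ^ 2 := by
    rw [hmm, hsx]
    rcases le_or_gt a (p * σ) with hc | hc
    · have hd1 : (p * σ - a) ^ 2 ≤ (m - mX) ^ 2 := by
        have hh1 : 0 ≤ (|m| - p * σ) * (|m| + p * σ - 2 * a) :=
          mul_nonneg (sub_nonneg.2 hpm) (by linarith)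
        have hh2 : |m| ^ 2 = m ^ 2 := sq_abs m
        linarith [hh1, hh2, ha2, hfac1]
      have c1 : 0 ≤ u ^ 2 * ((m - mX) ^ 2 - (p * σ - a) ^ 2) :=
        mul_nonneg (sq_nonneg u) (by linarith)
      have c2 : 0 ≤ a * p * u * (u - σ) ^ 2 :=
        mul_nonneg (by positivity) (sq_nonneg _)
      have c3 : 0 ≤ u ^ 2 * (u - σ) ^ 2 := mul_nonneg (sq_nonneg u) (sq_nonneg _)
      linarith [c1, c2, c3]
    · have hσu' : σ < u := (mul_lt_mul_iff_right₀ hp).mp (by linarith)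
      have h2 : 0 < a * u - p * σ ^ 2 := by
        have hh1 : a * σ < a * u := mul_lt_mul_of_pos_left hσu' ha0
        have hh2 : (p * σ) * σ < a * σ := mul_lt_mul_of_pos_right hc hσ
        nlinarith [hh1, hh2]
      have c1 : 0 ≤ u ^ 2 * (m - mX) ^ 2 := mul_nonneg (sq_nonneg u) (sq_nonneg _)
      have c2 : 0 ≤ u * (p * u - a) * (a * u - p * σ ^ 2) :=
        mul_nonneg (mul_nonneg hupos.le (by linarith)) h2.le
      have c3 : 0 ≤ u ^ 2 * (u - σ) ^ 2 := mul_nonneg (sq_nonneg u) (sq_nonneg _)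
      linarith [c1, c2, c3]
  have halg : (sX ^ 2 + (mstar - mX) ^ 2) / u ^ 2 + (2 * (u / σ) - 2)
      ≤ (sX ^ 2 + (m - mX) ^ 2) / σ ^ 2 := by
    rw [← sub_nonneg]
    have expand : (sX ^ 2 + (m - mX) ^ 2) / σ ^ 2 -
        ((sX ^ 2 + (mstar - mX) ^ 2) / u ^ 2 + (2 * (u / σ) - 2))
        = ((sX ^ 2 + (m - mX) ^ 2) * u ^ 2 -
            ((sX ^ 2 + (mstar - mX) ^ 2) * σ ^ 2 + 2 * u ^ 3 * σ - 2 * u ^ 2 * σ ^ 2)) /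
          (u ^ 2 * σ ^ 2) := by
      field_simp
      ring
    rw [expand]
    apply div_nonneg (by linarith) (by positivity)
  linarith
end

section
/- Let m_X > 0, s_X > 0 and p > 0, and define on (0, ∞) the function h(m) = (1/2)·((s_X² + (m − m_X)²)·p²/m² + ln(m²/p²) + ln(2π)). Then m* = (−p²·m_X + p·√((p²+4)·m_X² + 4·s_X²))/2 satisfies m* > 0, is a critical point of h (i.e. −((s_X² + m_X²)/m*³)·p² + (m_X/m*²)·p² + 1/m* = 0), and h attains its global minimum over (0, ∞) at m*. -/
/-- On the boundary `σ = m / p` of the constraint set, the cross-entropy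
`h(m) = (1/2)((s_X² + (m − m_X)²) p²/m² + ln(m²/p²) + ln(2π))` has the closed-form
critical point `m*`, which is positive and is its global minimum over `(0, ∞)`. -/
theorem boundary_crossEntropy_global_min
    (mX sX p : ℝ) (hmX : 0 < mX) (hsX : 0 < sX) (hp : 0 < p)
    (h : ℝ → ℝ)
    (hdef : ∀ m, h m =
      (1 / 2) * ((sX ^ 2 + (m - mX) ^ 2) * p ^ 2 / m ^ 2
        + Real.log (m ^ 2 / p ^ 2) + Real.log (2 * Real.pi)))
    (mstar : ℝ)
    (hmstar : mstar = (-(p ^ 2) * mX + p * Real.sqrt ((p ^ 2 + 4) * mX ^ 2 + 4 * sX ^ 2)) / 2) :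
    0 < mstar ∧
      (-((sX ^ 2 + mX ^ 2) / mstar ^ 3) * p ^ 2 + (mX / mstar ^ 2) * p ^ 2 + 1 / mstar = 0) ∧
      ∀ m : ℝ, 0 < m → h mstar ≤ h m := by
  set D : ℝ := (p ^ 2 + 4) * mX ^ 2 + 4 * sX ^ 2 with hD
  have hDpos : 0 < D := by positivity
  have hsq : Real.sqrt D ^ 2 = D := Real.sq_sqrt hDpos.le
  -- positivity of mstar
  have hlt : p * mX < Real.sqrt D := by
    rw [show p * mX = Real.sqrt ((p*mX)^2) from (Real.sqrt_sq (by positivity)).symm]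
    apply Real.sqrt_lt_sqrt (by positivity)
    nlinarith
  have hmpos : 0 < mstar := by
    rw [hmstar]
    have : p ^ 2 * mX < p * Real.sqrt D := by
      have := mul_lt_mul_of_pos_left hlt hp
      nlinarith
    linarith
  -- the key quadratic identity
  have hq : mstar ^ 2 + p ^ 2 * mX * mstar = p ^ 2 * (sX ^ 2 + mX ^ 2) := by
    have h1 : 2 * mstar + p ^ 2 * mX = p * Real.sqrt D := by rw [hmstar]; ring
    have h2 : (2 * mstar + p ^ 2 * mX) ^ 2 = p ^ 2 * D := by
      rw [h1]; rw [mul_pow, hsq]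
    nlinarith [h2]
  have hmne : mstar ≠ 0 := ne_of_gt hmpos
  -- critical point equation
  have hcrit : -((sX ^ 2 + mX ^ 2) / mstar ^ 3) * p ^ 2 + (mX / mstar ^ 2) * p ^ 2
      + 1 / mstar = 0 := by
    field_simp
    linear_combination hq
  refine ⟨hmpos, hcrit, ?_⟩
  -- derivative of h
  have hder : ∀ m : ℝ, 0 < m →
      HasDerivAt h ((m ^ 2 + p ^ 2 * mX * m - p ^ 2 * (sX ^ 2 + mX ^ 2)) / m ^ 3) m := by
    intro m hm
    have hm0 : m ≠ 0 := ne_of_gt hm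
    have ha : HasDerivAt (fun m : ℝ => (sX ^ 2 + (m - mX) ^ 2) * p ^ 2)
        (2 * (m - mX) * p ^ 2) m := by
      have h0 : HasDerivAt (fun m : ℝ => sX ^ 2 + (m - mX) ^ 2) (2 * (m - mX)) m := by
        have := (((hasDerivAt_id m).sub_const mX).pow 2).const_add (sX ^ 2)
        simpa using this
      simpa using h0.mul_const (p ^ 2)
    have hb : HasDerivAt (fun m : ℝ => m ^ 2) (2 * m) m := by
      simpa using hasDerivAt_pow 2 m
    have h1 : HasDerivAt (fun m : ℝ => (sX ^ 2 + (m - mX) ^ 2) * p ^ 2 / m ^ 2)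
        ((2 * (m - mX) * p ^ 2 * m ^ 2 - (sX ^ 2 + (m - mX) ^ 2) * p ^ 2 * (2 * m))
          / (m ^ 2) ^ 2) m :=
      ha.div hb (pow_ne_zero 2 hm0)
    have hb2 : HasDerivAt (fun m : ℝ => m ^ 2 / p ^ 2) (2 * m / p ^ 2) m := by
      simpa using hb.div_const (p ^ 2)
    have h2 : HasDerivAt (fun m : ℝ => Real.log (m ^ 2 / p ^ 2))
        ((2 * m / p ^ 2) / (m ^ 2 / p ^ 2)) m :=
      hb2.log (by positivity)
    have h3 := ((h1.add h2).add_const (Real.log (2 * Real.pi))).const_mul (1 / 2 : ℝ)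
    have hfun : h = fun m => (1 / 2) * ((sX ^ 2 + (m - mX) ^ 2) * p ^ 2 / m ^ 2
        + Real.log (m ^ 2 / p ^ 2) + Real.log (2 * Real.pi)) := funext hdef
    rw [hfun]
    refine HasDerivAt.congr_deriv h3 ?_
    field_simp
    ring
  -- antitone on (0, mstar], monotone on [mstar, ∞)
  have hanti : AntitoneOn h (Set.Ioc 0 mstar) := by
    apply antitoneOn_of_deriv_nonpos (convex_Ioc 0 mstar)
    · intro x hx
      exact (hder x hx.1).continuousAt.continuousWithinAt
    · intro x hx
      rw [interior_Ioc] at hx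
      exact (hder x hx.1).differentiableAt.differentiableWithinAt
    · intro x hx
      rw [interior_Ioc] at hx
      have hx0 : 0 < x := hx.1
      rw [(hder x hx0).deriv]
      apply div_nonpos_of_nonpos_of_nonneg
      · nlinarith [hq, mul_pos (sub_pos.2 hx.2)
          (show 0 < mstar + x + p ^ 2 * mX by positivity)]
      · positivity
  have hmono : MonotoneOn h (Set.Ici mstar) := by
    apply monotoneOn_of_deriv_nonneg (convex_Ici mstar)
    · intro x hx
      exact (hder x (lt_of_lt_of_le hmpos hx)).continuousAt.continuousWithinAt
    · intro x hx
      rw [interior_Ici] at hx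
      exact (hder x (lt_trans hmpos hx)).differentiableAt.differentiableWithinAt
    · intro x hx
      rw [interior_Ici] at hx
      have hx0 : 0 < x := lt_trans hmpos hx
      rw [(hder x hx0).deriv]
      apply div_nonneg _ (by positivity)
      nlinarith [hq, mul_pos (sub_pos.2 hx)
          (show 0 < x + mstar + p ^ 2 * mX by positivity)]
  intro m hm
  rcases le_or_gt m mstar with hle | hlt
  · exact hanti ⟨hm, hle⟩ ⟨hmpos, le_refl mstar⟩ hle
  · exact hmono (Set.self_mem_Ici) (le_of_lt hlt) (le_of_lt hlt)
end

section
/- Let m_X ∈ ℝ with m_X ≠ 0 and s_X > 0, and for p > 0 define m(p) = (−p²·m_X + sign(m_X)·p·√((p²+4)·m_X² + 4·s_X²))/2. Then m(p) tends to m_X + s_X²/m_X as p → ∞. -/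
open Filter

lemma sign_sq_one {x : ℝ} (hx : x ≠ 0) : Real.sign x ^ 2 = 1 := by
  rcases hx.lt_or_gt with h | h
  · rw [Real.sign_of_neg h]; norm_num
  · rw [Real.sign_of_pos h]; norm_num

lemma sign_mul_abs' (x : ℝ) : Real.sign x * |x| = x := by
  rcases lt_trichotomy x 0 with h | h | h
  · rw [Real.sign_of_neg h, abs_of_neg h]; ring
  · simp [h]
  · rw [Real.sign_of_pos h, abs_of_pos h]; ring

/-- The constrained-optimal mean `m(p)` converges to `m_X + s_X²/m_X` as `p → ∞`
(i.e. as the leakage level `α → 0`). -/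
theorem constrained_mean_tendsto
    (mX sX : ℝ) (hmX : mX ≠ 0) (hsX : 0 < sX)
    (m : ℝ → ℝ)
    (hm : ∀ p, m p =
      (-(p ^ 2) * mX + Real.sign mX * p * Real.sqrt ((p ^ 2 + 4) * mX ^ 2 + 4 * sX ^ 2)) / 2) :
    Tendsto m atTop (nhds (mX + sX ^ 2 / mX)) := by
  set s := Real.sign mX with hsdef
  set N : ℝ := 4 * mX ^ 2 + 4 * sX ^ 2 with hNdef
  have hN : 0 < N := by positivity
  set F : ℝ → ℝ := fun p => N / (2 * (mX + s * Real.sqrt (mX ^ 2 + N / p ^ 2))) with hF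
  -- limit of the inner expression
  have hlim1 : Tendsto (fun p : ℝ => mX ^ 2 + N / p ^ 2) atTop (nhds (mX ^ 2)) := by
    have h0 : Tendsto (fun p : ℝ => N / p ^ 2) atTop (nhds 0) := by
      apply Tendsto.div_atTop tendsto_const_nhds
      exact tendsto_pow_atTop (by norm_num)
    simpa using (tendsto_const_nhds.add h0)
  have hsqrt : Tendsto (fun p : ℝ => Real.sqrt (mX ^ 2 + N / p ^ 2)) atTop (nhds |mX|) := by
    have := (Real.continuous_sqrt.tendsto (mX ^ 2)).comp hlim1
    simpa [Function.comp_def, Real.sqrt_sq_eq_abs] using this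
  have hden : Tendsto (fun p : ℝ => 2 * (mX + s * Real.sqrt (mX ^ 2 + N / p ^ 2)))
      atTop (nhds (4 * mX)) := by
    have : Tendsto (fun p : ℝ => 2 * (mX + s * Real.sqrt (mX ^ 2 + N / p ^ 2)))
        atTop (nhds (2 * (mX + s * |mX|))) :=
      (tendsto_const_nhds.add (tendsto_const_nhds.mul hsqrt)).const_mul 2
    rwa [show mX + s * |mX| = 2 * mX by rw [hsdef, sign_mul_abs' mX]; ring,
      show (2:ℝ) * (2 * mX) = 4 * mX by ring] at this
  have h4 : (4 : ℝ) * mX ≠ 0 := by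
    intro h; exact hmX (by linarith [mul_eq_zero.mp h |>.resolve_left (by norm_num)])
  have hlimF : Tendsto F atTop (nhds (mX + sX ^ 2 / mX)) := by
    have h1 : Tendsto F atTop (nhds (N / (4 * mX))) := tendsto_const_nhds.div hden h4
    have h2 : N / (4 * mX) = mX + sX ^ 2 / mX := by
      rw [hNdef]; field_simp
    rwa [h2] at h1
  -- eventual equality of m and F
  refine Tendsto.congr' ?_ hlimF
  filter_upwards [eventually_gt_atTop (0 : ℝ)] with p hp
  have hp2 : (0:ℝ) < p ^ 2 := by positivity
  set g : ℝ := mX ^ 2 + N / p ^ 2 with hg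
  have hg0 : 0 ≤ g := by positivity
  have hgS : (p ^ 2 + 4) * mX ^ 2 + 4 * sX ^ 2 = g * p ^ 2 := by
    rw [hg, hNdef]; field_simp; ring
  have hsqrtS : Real.sqrt ((p ^ 2 + 4) * mX ^ 2 + 4 * sX ^ 2) = Real.sqrt g * p := by
    rw [hgS, Real.sqrt_mul hg0, Real.sqrt_sq hp.le]
  have hgm : mX ^ 2 < g := by
    rw [hg]; nlinarith [div_pos hN hp2]
  have habs : |mX| < Real.sqrt g := by
    rw [← Real.sqrt_sq_eq_abs]
    exact Real.sqrt_lt_sqrt (by positivity) hgm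
  have hs2 : s ^ 2 = 1 := sign_sq_one hmX
  have hdne : mX + s * Real.sqrt g ≠ 0 := by
    intro h
    have h1 : s * Real.sqrt g = -mX := by linarith
    have h2 : |s * Real.sqrt g| = |mX| := by rw [h1, abs_neg]
    have habs1 : |s| = 1 := by
      rcases hmX.lt_or_gt with h | h
      · rw [hsdef, Real.sign_of_neg h]; norm_num
      · rw [hsdef, Real.sign_of_pos h]; norm_num
    rw [abs_mul, habs1, one_mul, abs_of_nonneg (Real.sqrt_nonneg g)] at h2
    linarith
  have hsq : Real.sqrt g * Real.sqrt g = g := Real.mul_self_sqrt hg0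
  have hgp : g * p ^ 2 = mX ^ 2 * p ^ 2 + N := by
    rw [hg]; field_simp
  have hden2 : 2 * (mX + s * Real.sqrt g) ≠ 0 := by
    intro h; exact hdne (by linarith)
  rw [hm p, hsqrtS]
  show N / (2 * (mX + s * Real.sqrt g)) =
    (-p ^ 2 * mX + s * p * (Real.sqrt g * p)) / 2
  rw [div_eq_div_iff hden2 (by norm_num)]
  linear_combination -(2 * p ^ 2 * s ^ 2 * hsq + 2 * p ^ 2 * g * hs2 + 2 * hgp)
end

section
/- Let m_X ∈ ℝ with m_X ≠ 0 and s_X > 0, and for p > 0 define m(p) = (−p²·m_X + sign(m_X)·p·√((p²+4)·m_X² + 4·s_X²))/2 and σ(p) = |m(p)|/p. Then σ(p) tends to 0 as p → ∞. -/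
open Filter

/-- The constrained-optimal standard deviation `σ(p) = |m(p)|/p` converges to `0`
as `p → ∞` (i.e. as the leakage level `α → 0`). -/
theorem constrained_stddev_tendsto_zero
    (mX sX : ℝ) (hmX : mX ≠ 0) (hsX : 0 < sX)
    (m σ : ℝ → ℝ)
    (hm : ∀ p, m p =
      (-(p ^ 2) * mX + Real.sign mX * p * Real.sqrt ((p ^ 2 + 4) * mX ^ 2 + 4 * sX ^ 2)) / 2)
    (hσ : ∀ p, σ p = |m p| / p) :
    Tendsto σ atTop (nhds 0) := by
  have ha : (0:ℝ) < |mX| := abs_pos.mpr hmX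
  set C : ℝ := (mX ^ 2 + sX ^ 2) / |mX| with hCdef
  have hC0 : 0 ≤ C := div_nonneg (by positivity) ha.le
  have key : ∀ p : ℝ, 0 < p → |m p| ≤ C := by
    intro p hp
    set X : ℝ := (p ^ 2 + 4) * mX ^ 2 + 4 * sX ^ 2 with hXdef
    have hX0 : 0 ≤ X := by positivity
    have hsq : 0 ≤ Real.sqrt X := Real.sqrt_nonneg X
    have hpa : 0 < p * |mX| := mul_pos hp ha
    set c : ℝ := 2 * (mX ^ 2 + sX ^ 2) / (p * |mX|) with hcdef
    have hc0 : 0 ≤ c := by positivity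
    have hcc : c * (p * |mX|) = 2 * (mX ^ 2 + sX ^ 2) := div_mul_cancel₀ _ hpa.ne'
    have h1 : p * |mX| ≤ Real.sqrt X := by
      rw [show p * |mX| = Real.sqrt ((p * |mX|) ^ 2) from
        (Real.sqrt_sq hpa.le).symm]
      apply Real.sqrt_le_sqrt
      nlinarith [sq_abs mX, sq_nonneg sX]
    have h2 : Real.sqrt X ≤ p * |mX| + c := by
      have hle : X ≤ (p * |mX| + c) ^ 2 := by
        nlinarith [sq_nonneg c, sq_abs mX]
      calc Real.sqrt X ≤ Real.sqrt ((p * |mX| + c) ^ 2) := Real.sqrt_le_sqrt hle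
        _ = p * |mX| + c := Real.sqrt_sq (by positivity)
    have hpc : p * c = 2 * C := by
      rw [hcdef, hCdef]
      field_simp
    have h1' : p * (p * |mX|) ≤ p * Real.sqrt X := by
      exact mul_le_mul_of_nonneg_left h1 hp.le
    have h2' : p * Real.sqrt X ≤ p * (p * |mX| + c) :=
      mul_le_mul_of_nonneg_left h2 hp.le
    rcases hmX.lt_or_gt with hneg | hpos
    · have hsgn : Real.sign mX = -1 := Real.sign_of_neg hneg
      have habs : |mX| = -mX := abs_of_neg hneg
      rw [hm p, hsgn]
      have hmle : (-(p ^ 2) * mX + (-1) * p * Real.sqrt X) / 2 ≤ 0 := by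
        rw [habs] at h1'; nlinarith
      rw [abs_of_nonpos hmle]
      rw [habs] at h2'
      nlinarith
    · have hsgn : Real.sign mX = 1 := Real.sign_of_pos hpos
      have habs : |mX| = mX := abs_of_pos hpos
      rw [hm p, hsgn]
      have hmge : 0 ≤ (-(p ^ 2) * mX + 1 * p * Real.sqrt X) / 2 := by
        rw [habs] at h1'; nlinarith
      rw [abs_of_nonneg hmge]
      rw [habs] at h2'
      nlinarith
  apply squeeze_zero' (g := fun p => C / p)
  · filter_upwards [eventually_gt_atTop (0:ℝ)] with p hp
    rw [hσ p]
    positivity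
  · filter_upwards [eventually_gt_atTop (0:ℝ)] with p hp
    rw [hσ p]
    gcongr
    exact key p hp
  · exact tendsto_const_nhds.div_atTop tendsto_id
end
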